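/- Assume δ, ρ ∈ (0,1) are sufficiently small, γ ∈ (0,1) is sufficiently small depending on δ, ρ, and μ ∈ (0,1) is sufficiently small depending on δ, ρ, γ. Let H ≥ H₀/2 with H₀ := (1/7)√(δn). Then there is a constant c(δ,ρ) > 0 such that for every w ∈ ℝ^n with ‖v − w‖₂ ≤ 4μ√n/H for some v ∈ S_H, one has CLCD_{μn/2, γ/2}(w) ≥ H/16 and ‖D(w)‖₂ ≥ c(δ,ρ)√n. -/

import Mathlib

/-!
Put `E = ‖D(v - w)‖₂`. Since `‖D u‖₂² = n ∑ (u i - ū)²`, we have `‖D u‖₂ ≤ √n ‖u‖₂`, so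
`E ≤ 4μn/H ≤ 56 μ √n / √δ`; and by Chebyshev's inequality a non-almost-constant `v` has
`‖D v‖₂ ≥ √δ ρ √n`. Hence `μ < γδρ/224` forces `E ≤ γ ‖D v‖₂ / 4`, which gives
`‖D w‖₂ ≥ ‖D v‖₂ / 2 ≥ (√δ ρ / 2) √n`. Moreover the distance to the lattice is 1-Lipschitz, so
any `θ < H/16` with `dist(θ D(w), ℤ^N) < min(γ/2 ‖θ D(w)‖₂, μn/2)` also satisfies
`dist(θ D(v), ℤ^N) < min(γ ‖θ D(v)‖₂, μn)`, contradicting `CLCD_{μn,γ}(v) ≥ H`.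
-/

open Real

noncomputable section

/-- A vector `v` is almost-constant (with parameters `δ, ρ`) if some `λ ∈ ℝ` satisfies
`|v i − λ| ≤ ρ/√n` for at least `(1−δ)n` coordinates `i`. -/
def almostConst {n : ℕ} (δ ρ : ℝ) (v : Fin n → ℝ) : Prop :=
  ∃ lam : ℝ, (1 - δ) * n ≤ (Nat.card {i : Fin n // |v i - lam| ≤ ρ / Real.sqrt n} : ℝ)

/-- Euclidean norm of a finitely indexed real vector. -/
def pnorm {ι : Type*} [Fintype ι] (x : ι → ℝ) : ℝ := Real.sqrt (∑ i, x i ^ 2)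

/-- Index type for the coordinates of `D(v)`: pairs `(i, j)` with `i < j`. -/
abbrev PairIdx (n : ℕ) := {p : Fin n × Fin n // p.1 < p.2}

/-- `D(v)`: the vector in `ℝ^{n(n-1)/2}` whose `(i,j)`-coordinate is `v i - v j`
for `i < j`. -/
def Dvec {n : ℕ} (v : Fin n → ℝ) : PairIdx n → ℝ := fun p => v p.1.1 - v p.1.2

/-- Euclidean distance from a vector to the integer lattice. -/
def latDist {ι : Type*} [Fintype ι] (x : ι → ℝ) : ℝ :=
  ⨅ m : ι → ℤ, pnorm (fun i => x i - (m i : ℝ))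

/-- The combinatorial least common denominator
`CLCD_{α,γ}(v) = inf {θ > 0 : dist(θ D(v), ℤ^{n(n-1)/2}) < min(γ ‖θ D(v)‖₂, α)}`,
as an extended nonnegative real (`∞` if no such `θ` exists). -/
def CLCD (n : ℕ) (α γ : ℝ) (v : Fin n → ℝ) : ENNReal :=
  sInf {θ : ENNReal | ∃ t : ℝ, 0 < t ∧ θ = ENNReal.ofReal t ∧
    latDist (fun p => t * Dvec v p) < min (γ * pnorm (fun p => t * Dvec v p)) α}

/-- The level set `S_H = {v ∈ N(δ,ρ) : H ≤ CLCD_{μn,γ}(v) ≤ 2H}` of non-almost-constant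
unit vectors whose CLCD is comparable to `H`. -/
def levelSet (n : ℕ) (δ ρ μ γ H : ℝ) : Set (Fin n → ℝ) :=
  {v | pnorm v = 1 ∧ ¬ almostConst δ ρ v ∧
    ENNReal.ofReal H ≤ CLCD n (μ * n) γ v ∧ CLCD n (μ * n) γ v ≤ ENNReal.ofReal (2 * H)}

open Finset

section pnorm

variable {ι : Type*} [Fintype ι]

lemma pnorm_eq_norm (x : ι → ℝ) : pnorm x = ‖WithLp.toLp 2 x‖ := by
  simp [pnorm, EuclideanSpace.norm_eq]

lemma pnorm_nonneg (x : ι → ℝ) : 0 ≤ pnorm x := Real.sqrt_nonneg _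

lemma pnorm_sq (x : ι → ℝ) : pnorm x ^ 2 = ∑ i, x i ^ 2 :=
  Real.sq_sqrt (sum_nonneg fun _ _ => sq_nonneg _)

lemma pnorm_add_le (x y : ι → ℝ) : pnorm (x + y) ≤ pnorm x + pnorm y := by
  simpa only [pnorm_eq_norm, WithLp.toLp_add] using norm_add_le _ _

lemma pnorm_smul (t : ℝ) (x : ι → ℝ) : pnorm (fun i => t * x i) = |t| * pnorm x := by
  rw [show (fun i => t * x i) = t • x from rfl, pnorm_eq_norm, pnorm_eq_norm, WithLp.toLp_smul,
    norm_smul, Real.norm_eq_abs]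

lemma latDist_le_pnorm_sub (x : ι → ℝ) (m : ι → ℤ) : latDist x ≤ pnorm (fun i => x i - m i) :=
  ciInf_le ⟨0, by rintro _ ⟨m, rfl⟩; exact pnorm_nonneg _⟩ m

lemma latDist_le_add_pnorm_sub (x y : ι → ℝ) : latDist x ≤ latDist y + pnorm (x - y) := by
  have key : ∀ m : ι → ℤ, latDist x - pnorm (x - y) ≤ pnorm (fun i => y i - m i) := fun m => by
    have htri := pnorm_add_le (fun i => y i - m i) (x - y)
    rw [show ((fun i => y i - m i) + (x - y)) = fun i => x i - m i by ext; simp] at htri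
    linarith [latDist_le_pnorm_sub x m]
  have : latDist x - pnorm (x - y) ≤ latDist y := le_ciInf key
  linarith

end pnorm

lemma card_filter_lt_abs_mul_sq_le_sum_sq {ι : Type*} [Fintype ι] (x : ι → ℝ) {r : ℝ}
    (hr : 0 ≤ r) :
    #{i | r < |x i|} * r ^ 2 ≤ ∑ i, x i ^ 2 := by
  rw [← nsmul_eq_mul]
  calc #{i | r < |x i|} • r ^ 2 ≤ ∑ i ∈ {i | r < |x i|}, x i ^ 2 :=
        card_nsmul_le_sum _ _ _ fun i hi => by
          rw [← sq_abs (x i)]; exact pow_le_pow_left₀ hr (mem_filter.mp hi).2.le 2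
    _ ≤ ∑ i, x i ^ 2 := sum_le_sum_of_subset_of_nonneg (subset_univ _) fun _ _ _ => sq_nonneg _

section Dvec

variable {n : ℕ}

lemma Dvec_sub (v w : Fin n → ℝ) : Dvec (v - w) = Dvec v - Dvec w := by
  ext p; simp only [Dvec, Pi.sub_apply]; ring

lemma two_mul_sum_pairIdx (g : Fin n → Fin n → ℝ) (hsymm : ∀ i j, g i j = g j i)
    (hdiag : ∀ i, g i i = 0) :
    2 * ∑ p : PairIdx n, g p.1.1 p.1.2 = ∑ i, ∑ j, g i j := by
  have hpairs : ∑ p : PairIdx n, g p.1.1 p.1.2 = ∑ i, ∑ j, if i < j then g i j else 0 := by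
    rw [← sum_subtype {p : Fin n × Fin n | p.1 < p.2} (by simp) fun p => g p.1 p.2, sum_filter,
      Fintype.sum_prod_type]
  have hsplit : ∀ i j, g i j = (if i < j then g i j else 0) + (if j < i then g j i else 0) := by
    intro i j
    rcases lt_trichotomy i j with h | rfl | h
    · simp [h, h.not_gt]
    · simp [hdiag]
    · simp [h, h.not_gt, hsymm i j]
  rw [hpairs, two_mul]
  nth_rewrite 2 [sum_comm]
  rw [← sum_add_distrib]
  refine sum_congr rfl fun i _ => ?_
  rw [← sum_add_distrib]
  exact sum_congr rfl fun j _ => (hsplit i j).symm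

lemma pnorm_Dvec_sq (v : Fin n → ℝ) : pnorm (Dvec v) ^ 2 = n * ∑ i, v i ^ 2 - (∑ i, v i) ^ 2 := by
  have hpairs := two_mul_sum_pairIdx (fun i j => (v i - v j) ^ 2) (fun i j => by ring)
    (fun i => by ring)
  have hfull : ∑ i, ∑ j, (v i - v j) ^ 2 = 2 * (n * ∑ i, v i ^ 2 - (∑ i, v i) ^ 2) := by
    simp only [sub_sq, sum_add_distrib, sum_sub_distrib, ← mul_sum, ← sum_mul, sum_const,
      card_univ, Fintype.card_fin, nsmul_eq_mul]
    ring
  rw [pnorm_sq]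
  simp only [Dvec] at hpairs ⊢
  linarith

lemma pnorm_Dvec_le (u : Fin n → ℝ) : pnorm (Dvec u) ≤ √n * pnorm u := by
  rw [← pow_le_pow_iff_left₀ (pnorm_nonneg _) (by positivity [pnorm_nonneg u]) two_ne_zero,
    mul_pow, Real.sq_sqrt n.cast_nonneg, pnorm_Dvec_sq, pnorm_sq]
  nlinarith [sq_nonneg (∑ i, u i)]

lemma mul_sum_sq_sub_mean_eq_pnorm_Dvec_sq (hn : 0 < n) (v : Fin n → ℝ) :
    n * ∑ i, (v i - (∑ j, v j) / n) ^ 2 = pnorm (Dvec v) ^ 2 := by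
  simp only [pnorm_Dvec_sq, sub_sq, sum_add_distrib, sum_sub_distrib, ← mul_sum, ← sum_mul,
    sum_const, card_univ, Fintype.card_fin, nsmul_eq_mul]
  field_simp
  ring

lemma le_pnorm_Dvec_of_not_almostConst (hn : 0 < n) {δ ρ : ℝ} (hδ : 0 ≤ δ) (hρ : 0 < ρ)
    {v : Fin n → ℝ} (hv : ¬ almostConst δ ρ v) : √δ * ρ * √n ≤ pnorm (Dvec v) := by
  by_contra! h
  apply hv
  set lam := (∑ j, v j) / n
  have hn' : (0 : ℝ) < n := by exact_mod_cast hn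
  have hvar : ∑ i, (v i - lam) ^ 2 < δ * ρ ^ 2 := by
    refine lt_of_mul_lt_mul_left ?_ hn'.le
    rw [mul_sum_sq_sub_mean_eq_pnorm_Dvec_sq hn]
    calc pnorm (Dvec v) ^ 2 < (√δ * ρ * √n) ^ 2 := by gcongr; exact pnorm_nonneg _
      _ = n * (δ * ρ ^ 2) := by rw [mul_pow, mul_pow, Real.sq_sqrt hδ, Real.sq_sqrt hn'.le]; ring
  have hfar :=
    card_filter_lt_abs_mul_sq_le_sum_sq (fun i => v i - lam) (by positivity : 0 ≤ ρ / √n)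
  rw [div_pow, Real.sq_sqrt hn'.le, ← mul_div_assoc, div_le_iff₀ hn'] at hfar
  have hfar' : (#{i | ρ / √n < |v i - lam|} : ℝ) < δ * n :=
    lt_of_mul_lt_mul_right (by nlinarith) (sq_nonneg ρ)
  have hsplit := card_filter_add_card_filter_not (s := univ)
    (fun i : Fin n => |v i - lam| ≤ ρ / √n)
  simp only [not_le, card_univ, Fintype.card_fin] at hsplit
  refine ⟨lam, ?_⟩
  rw [Nat.card_eq_fintype_card, Fintype.card_subtype]
  have : (#{i | |v i - lam| ≤ ρ / √n} : ℝ) + #{i | ρ / √n < |v i - lam|} = n := by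
    exact_mod_cast hsplit
  linarith

end Dvec

section CLCD

variable {n : ℕ}

lemma abs_pnorm_Dvec_sub_pnorm_Dvec_le (v w : Fin n → ℝ) :
    |pnorm (Dvec v) - pnorm (Dvec w)| ≤ pnorm (Dvec (v - w)) := by
  simpa only [pnorm_eq_norm, Dvec_sub, WithLp.toLp_sub] using abs_norm_sub_norm_le _ _

lemma latDist_lt_of_pnorm_Dvec_sub_le {v w : Fin n → ℝ} {α γ t : ℝ} (hγ0 : 0 ≤ γ) (hγ : γ ≤ 1)
    (ht : 0 ≤ t) (hE : pnorm (Dvec (v - w)) ≤ γ * pnorm (Dvec v) / 4)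
    (htE : t * pnorm (Dvec (v - w)) ≤ α / 2)
    (hw : latDist (fun p => t * Dvec w p) <
      min (γ / 2 * pnorm (fun p => t * Dvec w p)) (α / 2)) :
    latDist (fun p => t * Dvec v p) < min (γ * pnorm (fun p => t * Dvec v p)) α := by
  have hlat := latDist_le_add_pnorm_sub (fun p => t * Dvec v p) (fun p => t * Dvec w p)
  rw [show ((fun p => t * Dvec v p) - fun p => t * Dvec w p) = fun p => t * Dvec (v - w) p by
    ext; simp only [Dvec_sub, Pi.sub_apply]; ring] at hlat
  simp only [pnorm_smul, abs_of_nonneg ht, lt_min_iff] at hlat hw ⊢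
  have hnorm : t * pnorm (Dvec w) ≤ t * (pnorm (Dvec v) + pnorm (Dvec (v - w))) := by
    have := (abs_le.mp (abs_pnorm_Dvec_sub_pnorm_Dvec_le v w)).1
    gcongr; linarith
  have hE' := mul_le_mul_of_nonneg_left hE ht
  have hγtE : γ * (t * pnorm (Dvec (v - w))) ≤ t * pnorm (Dvec (v - w)) :=
    mul_le_of_le_one_left (by positivity [pnorm_nonneg (Dvec (v - w))]) hγ
  have hγtDv : 0 ≤ γ * (t * pnorm (Dvec v)) := by positivity [pnorm_nonneg (Dvec v)]
  have hγnorm := mul_le_mul_of_nonneg_left hnorm hγ0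
  constructor <;> linarith

lemma ofReal_le_CLCD_of_pnorm_Dvec_sub_le {v w : Fin n → ℝ} {α γ T : ℝ} (hγ0 : 0 ≤ γ)
    (hγ : γ ≤ 1) (hE : pnorm (Dvec (v - w)) ≤ γ * pnorm (Dvec v) / 4)
    (hTE : T * pnorm (Dvec (v - w)) ≤ α / 2) (hv : ENNReal.ofReal T ≤ CLCD n α γ v) :
    ENNReal.ofReal T ≤ CLCD n (α / 2) (γ / 2) w := by
  refine le_sInf ?_
  rintro _ ⟨t, ht, rfl, hw⟩
  by_contra! htT
  have htT' : t < T := (ENNReal.ofReal_lt_ofReal_iff_of_nonneg ht.le).mp htT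
  have hv_wit := latDist_lt_of_pnorm_Dvec_sub_le hγ0 hγ ht.le hE
    (le_trans (by gcongr; exact pnorm_nonneg _) hTE) hw
  exact (hv.trans (sInf_le ⟨t, ht, rfl, hv_wit⟩)).not_gt htT

end CLCD

/-- for sufficiently small `δ, ρ`, there is `c(δ,ρ) > 0` such that for
sufficiently small `γ` (depending on `δ, ρ`) and sufficiently small `μ` (depending on
`δ, ρ, γ`), for every `H ≥ H₀/2` (`H₀ = (1/7)√(δn)`) and every `w` within distance
`4μ√n/H` of some `v ∈ S_H`, one has `CLCD_{μn/2, γ/2}(w) ≥ H/16` and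
`‖D(w)‖₂ ≥ c(δ,ρ)√n`. -/
theorem stmt14 :
    ∃ ε₁ : ℝ, 0 < ε₁ ∧ ∀ δ ρ : ℝ, 0 < δ → δ < ε₁ → 0 < ρ → ρ < ε₁ →
    ∃ c : ℝ, 0 < c ∧
    ∃ ε₂ : ℝ, 0 < ε₂ ∧ ∀ γ : ℝ, 0 < γ → γ < ε₂ →
    ∃ ε₃ : ℝ, 0 < ε₃ ∧ ∀ μ : ℝ, 0 < μ → μ < ε₃ →
    ∀ n : ℕ, 0 < n →
    ∀ H : ℝ, 1 / 7 * Real.sqrt (δ * n) / 2 ≤ H →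
    ∀ w : Fin n → ℝ,
      (∃ v ∈ levelSet n δ ρ μ γ H, pnorm (fun i => v i - w i) ≤ 4 * μ * Real.sqrt n / H) →
      ENNReal.ofReal (H / 16) ≤ CLCD n (μ * n / 2) (γ / 2) w ∧
      c * Real.sqrt n ≤ pnorm (Dvec w) := by
  refine ⟨1, one_pos, fun δ ρ hδ _ hρ _ => ⟨√δ * ρ / 2, by positivity, 1, one_pos,
    fun γ hγ hγ1 => ⟨γ * δ * ρ / 224, by positivity, fun μ hμ hμγ n hn H hH w => ?_⟩⟩⟩
  rintro ⟨v, ⟨-, hv_nac, hv_CLCD, -⟩, hvw⟩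
  have hn' : (0 : ℝ) < n := by exact_mod_cast hn
  have hDv := le_pnorm_Dvec_of_not_almostConst hn hδ.le hρ hv_nac
  rw [Real.sqrt_mul hδ.le] at hH
  have hH0 : 0 < H := lt_of_lt_of_le (by positivity) hH
  have hE : pnorm (Dvec (v - w)) ≤ 4 * μ * n / H :=
    calc pnorm (Dvec (v - w)) ≤ √n * (4 * μ * √n / H) :=
          (pnorm_Dvec_le _).trans (by gcongr; exact hvw)
      _ = 4 * μ * n / H := by linear_combination (4 * μ / H) * Real.mul_self_sqrt hn'.le
  have hE_small : pnorm (Dvec (v - w)) ≤ γ * pnorm (Dvec v) / 4 := by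
    have hH' := mul_le_mul_of_nonneg_left hH (by positivity : 0 ≤ γ * (√δ * ρ * √n) / 4)
    have hcancel : γ * (√δ * ρ * √n) / 4 * (1 / 7 * (√δ * √n) / 2) = γ * δ * ρ * n / 56 := by
      linear_combination (γ * ρ / 56) * (√n * √n) * Real.mul_self_sqrt hδ.le +
        (γ * ρ * δ / 56) * Real.mul_self_sqrt hn'.le
    calc pnorm (Dvec (v - w)) ≤ 4 * μ * n / H := hE
      _ ≤ γ * (√δ * ρ * √n) / 4 := by rw [div_le_iff₀ hH0]; nlinarith
      _ ≤ γ * pnorm (Dvec v) / 4 := by gcongr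
  refine ⟨ofReal_le_CLCD_of_pnorm_Dvec_sub_le hγ.le hγ1.le hE_small ?_
    ((ENNReal.ofReal_le_ofReal (by linarith)).trans hv_CLCD), ?_⟩
  · calc H / 16 * pnorm (Dvec (v - w)) ≤ H / 16 * (4 * μ * n / H) := by gcongr
      _ ≤ μ * n / 2 := by field_simp; nlinarith
  · have := (abs_le.mp (abs_pnorm_Dvec_sub_pnorm_Dvec_le v w)).2
    have : 0 ≤ √δ * ρ * √n := by positivity
    linarith [mul_le_of_le_one_left (pnorm_nonneg (Dvec v)) hγ1.le]

end
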